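/- arXiv:2001.04711 — 3 statements merged into one kernel-verified Lean document; each statement's English description precedes it below -/
import Mathlib

section
/- Let w, μ, n, r, N be positive integers with 2 ≤ r+1 ≤ n, let F = GF(2^w), and let β ∈ F have multiplicative order O(β) ≥ μN. Let L = {i_1, …, i_n} be a set of n distinct non-negative integers and let H be the (rμ+2) × (μn) parity-check matrix of the generalized Blaum–Plank construction for these data. If N ≥ (max_{i∈L} i) + 1, then H satisfies the (r, s=2) sector-disk criterion: for every subset T ⊆ {1, …, n} with |T| = r, setting E_i = {(i−1)n + t : t ∈ T} ⊆ W_i for i = 1, …, μ, and for every 2-element set F ⊆ {1, …, μn} \ (∪_i E_i), the (rμ+2) × (rμ+2) submatrix of H formed by the columns indexed by (∪_i E_i) ∪ F is invertible. -/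
/-- The generalized Blaum–Plank parity-check matrix `H` of size `(rμ+2) × (μn)` over a
field `F`, built from a unit `β` and code locators `L : Fin n → ℕ`.
Rows `0, …, rμ-1` form the `μ` diagonal blocks `H₀` (block `i = v / r`,
row-within-block `u = v % r`, entry `β^(u · i_t)` in group `g = c / n` when `g = i`,
and `0` otherwise); row `rμ` has entries `β^(r · i_t)`; row `rμ+1` has entries
`β^(-jN - i_t)` where `j = c / n` is the (0-indexed) local group of column `c`. -/
noncomputable def blaumH (μ n r N : ℕ) (hn : 0 < n) {F : Type*} [Field F]
    (β : Fˣ) (L : Fin n → ℕ) :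
    Matrix (Fin (r * μ + 2)) (Fin (μ * n)) F :=
  fun v c =>
    if (v : ℕ) < r * μ then
      if (c : ℕ) / n = (v : ℕ) / r then
        ((β ^ (((v : ℕ) % r) * L ⟨(c : ℕ) % n, Nat.mod_lt _ hn⟩) : Fˣ) : F)
      else 0
    else if (v : ℕ) = r * μ then
      ((β ^ (r * L ⟨(c : ℕ) % n, Nat.mod_lt _ hn⟩) : Fˣ) : F)
    else
      ((β ^ (-(((c : ℕ) / n : ℤ) * (N : ℤ)) -
          (L ⟨(c : ℕ) % n, Nat.mod_lt _ hn⟩ : ℤ)) : Fˣ) : F)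

/-- The `(r, s)` sector-disk criterion for a matrix with `rμ + s` rows and `μn` columns,
columns partitioned into `μ` local groups of `n` consecutive columns: for every set
`T ⊆ {1,…,n}` of `r` within-group positions (used as the erased positions `E_i` in *every*
local group) and every `s`-element set `Fs` of further columns avoiding those positions,
the square submatrix on the columns `(∪ᵢ E_i) ∪ Fs` is invertible. -/
def sdCriterion {F : Type*} [Field F] (μ n r s : ℕ) (hn : 0 < n)
    (H : Matrix (Fin (r * μ + s)) (Fin (μ * n)) F) : Prop :=
  ∀ T : Finset (Fin n),
    T.card = r →
    ∀ Fs : Finset (Fin (μ * n)),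
      Fs.card = s →
      (∀ c ∈ Fs, (⟨(c : ℕ) % n, Nat.mod_lt _ hn⟩ : Fin n) ∉ T) →
      ∀ e : Fin (r * μ + s) → Fin (μ * n),
        Function.Injective e →
        (Set.range e =
          {c : Fin (μ * n) | (⟨(c : ℕ) % n, Nat.mod_lt _ hn⟩ : Fin n) ∈ T} ∪ ↑Fs) →
        IsUnit (H.submatrix id e).det

/-!
Write a kernel vector supported on the erased columns as `A i t` (local group `i`, position `t`),
put `z t = β ^ L t`, `w i = β ^ (-i N)`, and let `m_k a = ∑ t, a t * z t ^ k` for `k ≥ -1`.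
The block rows say `m_u (A i) = 0` for `u < r` in every group; the two global rows say
`∑ i, m_r (A i) = 0` and `∑ i, w i * m_{-1} (A i) = 0`. A group avoiding both extra columns is
supported on `T`, of size `r`, and vanishes by Vandermonde. If both extra columns lie in one
group, its support has size `r + 2` and its moments of orders `-1, …, r` vanish: Vandermonde
again. If they lie in groups `i ≠ j`, each is supported on `r + 1` positions, where the `r`
vanishing moments force `m_r = z t * (∏ s ∈ T, -z s) * m_{-1}`; the global rows then become a
`2 × 2` system in the two `m_{-1}` with determinant `z t * w j - z t' * w i`. It is nonzero
because the exponents `L t + i N` and `L t' + j N` differ (as `L < N`) and are both below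
`μ N ≤ orderOf β`.
-/

open Finset Polynomial Lagrange Matrix

section Moments

variable {ι F : Type*} [Fintype ι] [Field F] {a z : ι → F} {m : ℕ}

theorem sum_mul_eval_eq_coeff_mul_sum_mul_pow (q : F[X]) (hq : q.natDegree ≤ m)
    (h : ∀ u < m, ∑ t, a t * z t ^ u = 0) :
    ∑ t, a t * q.eval (z t) = q.coeff m * ∑ t, a t * z t ^ m := by
  simp_rw [eval_eq_sum_range' (Nat.lt_succ_of_le hq), Finset.mul_sum]
  rw [Finset.sum_comm, Finset.sum_range_succ, Finset.sum_eq_zero, zero_add]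
  · exact Finset.sum_congr rfl fun t _ => by ring
  · intro u hu
    rw [← mul_zero (q.coeff u), ← h u (Finset.mem_range.mp hu), Finset.mul_sum]
    exact Finset.sum_congr rfl fun t _ => by ring

theorem eq_zero_of_sum_mul_pow_eq_zero [DecidableEq ι] (s : Finset ι) (hz : Set.InjOn z s)
    (ha : ∀ t ∉ s, a t = 0) (h : ∀ u < #s, ∑ t, a t * z t ^ u = 0) : a = 0 := by
  funext t₀
  by_cases ht₀ : t₀ ∈ s
  swap
  · exact ha t₀ ht₀
  set q := nodal (s.erase t₀) z
  have hq : q.natDegree < #s := by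
    rw [natDegree_nodal, card_erase_of_mem ht₀]
    exact Nat.sub_lt (card_pos.mpr ⟨t₀, ht₀⟩) one_pos
  have hsum := sum_mul_eval_eq_coeff_mul_sum_mul_pow q hq.le h
  rw [coeff_eq_zero_of_natDegree_lt hq, zero_mul, Fintype.sum_eq_single t₀] at hsum
  · refine (mul_eq_zero.mp hsum).resolve_right (eval_nodal_not_at_node fun t ht => ?_)
    exact fun h => (mem_erase.mp ht).1 (hz ht₀ (mem_of_mem_erase ht) h).symm
  · intro t ht
    by_cases hts : t ∈ s
    · rw [eval_nodal_at_node (mem_erase.mpr ⟨ht, hts⟩), mul_zero]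
    · rw [ha t hts, zero_mul]

theorem sum_mul_pow_eq_neg_prod_mul_sum_mul_inv (s : Finset ι) (hs : #s = m + 1)
    (hz : ∀ t ∈ s, z t ≠ 0) (ha : ∀ t ∉ s, a t = 0) (h : ∀ u < m, ∑ t, a t * z t ^ u = 0) :
    ∑ t, a t * z t ^ m = -(∏ t ∈ s, -z t) * ∑ t, a t * (z t)⁻¹ := by
  set p := nodal s z
  have hdeg : p.divX.natDegree ≤ m := by
    rw [natDegree_divX_eq_natDegree_tsub_one, natDegree_nodal, hs, Nat.add_sub_cancel]
  have hlead : p.divX.coeff m = 1 := by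
    rw [coeff_divX, ← hs, ← natDegree_nodal (R := F)]
    exact nodal_monic.coeff_natDegree
  have hconst : p.coeff 0 = ∏ t ∈ s, -z t := by
    simp [p, coeff_zero_eq_eval_zero, eval_nodal]
  have heval : ∀ t, a t * p.divX.eval (z t) = -p.coeff 0 * (a t * (z t)⁻¹) := by
    intro t
    by_cases ht : t ∈ s
    · have hroot := congrArg (eval (z t)) (divX_mul_X_add p)
      rw [eval_add, eval_mul, eval_X, eval_C, eval_nodal_at_node ht] at hroot
      field_simp [hz t ht]
      linear_combination a t * hroot
    · simp [ha t ht]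
  rw [← one_mul (∑ t, a t * z t ^ m), ← hlead,
    ← sum_mul_eval_eq_coeff_mul_sum_mul_pow _ hdeg h]
  simp_rw [heval, ← Finset.mul_sum, hconst]

theorem eq_zero_of_sum_mul_inv_eq_zero [DecidableEq ι] (s : Finset ι) (hs : #s = m + 1)
    (hz0 : ∀ t ∈ s, z t ≠ 0) (hz : Set.InjOn z s) (ha : ∀ t ∉ s, a t = 0)
    (h : ∀ u < m, ∑ t, a t * z t ^ u = 0) (hinv : ∑ t, a t * (z t)⁻¹ = 0) : a = 0 := by
  refine eq_zero_of_sum_mul_pow_eq_zero s hz ha fun u hu => ?_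
  rcases (Nat.lt_succ_iff_lt_or_eq.mp (hs ▸ hu)) with hu | rfl
  · exact h u hu
  · rw [sum_mul_pow_eq_neg_prod_mul_sum_mul_inv s hs hz0 ha h, hinv, mul_zero]

theorem eq_zero_of_sum_mul_pow_eq_zero_of_sum_mul_inv_eq_zero [DecidableEq ι] (s : Finset ι)
    (hs : #s = m + 2) (hz0 : ∀ t ∈ s, z t ≠ 0) (hz : Set.InjOn z s) (ha : ∀ t ∉ s, a t = 0)
    (h : ∀ u < m, ∑ t, a t * z t ^ u = 0) (hm : ∑ t, a t * z t ^ m = 0)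
    (hinv : ∑ t, a t * (z t)⁻¹ = 0) : a = 0 := by
  have hb : (fun t => a t * (z t)⁻¹) = 0 := by
    refine eq_zero_of_sum_mul_pow_eq_zero s hz (fun t ht => by simp [ha t ht]) fun u hu => ?_
    have hshift : ∀ k, ∑ t, a t * (z t)⁻¹ * z t ^ (k + 1) = ∑ t, a t * z t ^ k := by
      intro k
      refine Fintype.sum_congr _ _ fun t => ?_
      by_cases ht : t ∈ s
      · field_simp [hz0 t ht]; ring
      · simp [ha t ht]
    rcases u with _ | k
    · simpa using hinv
    · rw [hshift]
      rcases (Nat.lt_succ_iff_lt_or_eq.mp (by omega : k < m + 1)) with hk | rfl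
      · exact h k hk
      · exact hm
  funext t
  by_cases ht : t ∈ s
  · simpa [hz0 t ht] using congrFun hb t
  · exact ha t ht

theorem eq_zero_and_eq_zero_of_coupled_moments [DecidableEq ι] {a₁ a₂ : ι → F}
    (hz0 : ∀ t, z t ≠ 0) (hz : Function.Injective z) (T : Finset ι) {t₁ t₂ : ι}
    (ht₁ : t₁ ∉ T) (ht₂ : t₂ ∉ T)
    {w₁ w₂ : F} (hw : z t₁ * w₂ ≠ z t₂ * w₁)
    (ha₁ : ∀ t ∉ insert t₁ T, a₁ t = 0) (ha₂ : ∀ t ∉ insert t₂ T, a₂ t = 0)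
    (h₁ : ∀ u < #T, ∑ t, a₁ t * z t ^ u = 0) (h₂ : ∀ u < #T, ∑ t, a₂ t * z t ^ u = 0)
    (hsum : ∑ t, a₁ t * z t ^ #T + ∑ t, a₂ t * z t ^ #T = 0)
    (hinv : w₁ * ∑ t, a₁ t * (z t)⁻¹ + w₂ * ∑ t, a₂ t * (z t)⁻¹ = 0) :
    a₁ = 0 ∧ a₂ = 0 := by
  have hcard : ∀ {t}, t ∉ T → #(insert t T) = #T + 1 := fun ht => card_insert_of_notMem ht
  have hQ : ∏ t ∈ T, -z t ≠ 0 := prod_ne_zero_iff.mpr fun t _ => neg_ne_zero.mpr (hz0 t)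
  have hm₁ := sum_mul_pow_eq_neg_prod_mul_sum_mul_inv _ (hcard ht₁) (fun t _ => hz0 t) ha₁ h₁
  have hm₂ := sum_mul_pow_eq_neg_prod_mul_sum_mul_inv _ (hcard ht₂) (fun t _ => hz0 t) ha₂ h₂
  rw [prod_insert ht₁] at hm₁
  rw [prod_insert ht₂] at hm₂
  set S₁ := ∑ t, a₁ t * (z t)⁻¹
  set S₂ := ∑ t, a₂ t * (z t)⁻¹
  have hrow : z t₁ * S₁ + z t₂ * S₂ = 0 := by
    refine (mul_eq_zero.mp ?_).resolve_left hQ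
    linear_combination hsum - hm₁ - hm₂
  have hdet : z t₁ * w₂ - z t₂ * w₁ ≠ 0 := sub_ne_zero.mpr hw
  have hS₁ : S₁ = 0 := (mul_eq_zero.mp (by linear_combination w₂ * hrow - z t₂ * hinv :
    S₁ * (z t₁ * w₂ - z t₂ * w₁) = 0)).resolve_right hdet
  have hS₂ : S₂ = 0 := (mul_eq_zero.mp (by linear_combination z t₁ * hinv - w₁ * hrow :
    S₂ * (z t₁ * w₂ - z t₂ * w₁) = 0)).resolve_right hdet
  exact ⟨eq_zero_of_sum_mul_inv_eq_zero _ (hcard ht₁) (fun t _ => hz0 t) hz.injOn ha₁ h₁ hS₁,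
    eq_zero_of_sum_mul_inv_eq_zero _ (hcard ht₂) (fun t _ => hz0 t) hz.injOn ha₂ h₂ hS₂⟩

end Moments

theorem eq_zero_of_sectorDisk_equations {ι κ F : Type*} [Fintype ι] [Fintype κ]
    [DecidableEq ι] [DecidableEq κ] [Field F] {z : κ → F} (hz0 : ∀ t, z t ≠ 0)
    (hz : Function.Injective z)
    {w : ι → F} (hw0 : ∀ i, w i ≠ 0) (hzw : ∀ i j t t', i ≠ j → z t * w j ≠ z t' * w i)
    (T : Finset κ) {f₁ f₂ : ι × κ} (hf : f₁ ≠ f₂) (hf₁ : f₁.2 ∉ T) (hf₂ : f₂.2 ∉ T)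
    {A : ι → κ → F} (hA : ∀ i t, t ∉ T → (i, t) ≠ f₁ → (i, t) ≠ f₂ → A i t = 0)
    (hloc : ∀ i, ∀ u < #T, ∑ t, A i t * z t ^ u = 0)
    (hglob : ∑ i, ∑ t, A i t * z t ^ #T = 0)
    (hinv : ∑ i, w i * ∑ t, A i t * (z t)⁻¹ = 0) : A = 0 := by
  obtain ⟨i₁, t₁⟩ := f₁
  obtain ⟨i₂, t₂⟩ := f₂
  have hother : ∀ i, i ≠ i₁ → i ≠ i₂ → A i = 0 := fun i h₁ h₂ =>
    eq_zero_of_sum_mul_pow_eq_zero T hz.injOn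
      (fun t ht => hA i t ht (by simp [h₁]) (by simp [h₂])) (hloc i)
  by_cases hi : i₁ = i₂
  · subst hi
    have ht : t₁ ∉ insert t₂ T := by simp_all
    have hA₁ : A i₁ = 0 := by
      refine eq_zero_of_sum_mul_pow_eq_zero_of_sum_mul_inv_eq_zero (insert t₁ (insert t₂ T))
        (by rw [card_insert_of_notMem ht, card_insert_of_notMem hf₂]) (fun t _ => hz0 t)
        hz.injOn (fun t ht' => hA i₁ t (by simp_all) (by simp_all) (by simp_all))
        (hloc i₁) ?_ ?_
      · rwa [Fintype.sum_eq_single i₁ fun i hi => by simp [hother i hi hi]] at hglob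
      · rw [Fintype.sum_eq_single i₁ fun i hi => by simp [hother i hi hi]] at hinv
        exact (mul_eq_zero.mp hinv).resolve_left (hw0 i₁)
    funext i
    obtain rfl | h := eq_or_ne i i₁
    exacts [hA₁, hother i h h]
  · have hsum : ∀ g : ι → F, (∀ i, A i = 0 → g i = 0) → ∑ i, g i = g i₁ + g i₂ :=
      fun g hg => Fintype.sum_eq_add i₁ i₂ hi fun i ⟨h₁, h₂⟩ => hg i (hother i h₁ h₂)
    obtain ⟨hA₁, hA₂⟩ := eq_zero_and_eq_zero_of_coupled_moments hz0 hz T hf₁ hf₂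
      (hzw i₁ i₂ t₁ t₂ hi)
      (fun t ht => hA i₁ t (by simp_all) (by simp_all) (by simp [hi]))
      (fun t ht => hA i₂ t (by simp_all) (by simp [Ne.symm hi]) (by simp_all))
      (hloc i₁) (hloc i₂)
      (by rwa [hsum _ fun i hi => by simp [hi]] at hglob)
      (by rwa [hsum _ fun i hi => by simp [hi]] at hinv)
    funext i
    obtain rfl | h₁ := eq_or_ne i i₁
    · exact hA₁
    obtain rfl | h₂ := eq_or_ne i i₂
    exacts [hA₂, hother i h₁ h₂]


theorem Matrix.isUnit_det_submatrix_of_forall_mulVec_eq_zero {m k F : Type*} [Fintype m]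
    [DecidableEq m] [Fintype k] [Field F] {M : Matrix m k F} {e : m → k}
    (he : Function.Injective e)
    (h : ∀ a : k → F, M *ᵥ a = 0 → (∀ c, a c ≠ 0 → c ∈ Set.range e) → a = 0) :
    IsUnit (M.submatrix id e).det := by
  rw [isUnit_iff_ne_zero]
  intro hdet
  obtain ⟨v, hv, hMv⟩ := Matrix.exists_mulVec_eq_zero_iff.mpr hdet
  have hext : Function.extend e v 0 = 0 := by
    refine h _ ?_ fun c hc => by_contra fun hc' => hc (Function.extend_apply' _ _ _ hc')
    rw [← hMv]
    funext i
    refine (Fintype.sum_of_injective e he _ _ (fun c hc => ?_) fun j => ?_).symm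
    · simp [Function.extend_apply' _ _ _ hc]
    · simp [he.extend_apply]
  exact hv (funext fun j => by simpa [he.extend_apply] using congrFun hext (e j))

theorem Matrix.mulVec_finProdFinEquiv {m F : Type*} [Fintype m] [CommSemiring F] {μ n : ℕ}
    (M : Matrix m (Fin (μ * n)) F) (a : Fin (μ * n) → F) (ρ : m) :
    (M *ᵥ a) ρ = ∑ i, ∑ t, M ρ (finProdFinEquiv (i, t)) * a (finProdFinEquiv (i, t)) := by
  rw [Matrix.mulVec, dotProduct, ← finProdFinEquiv.sum_comp, Fintype.sum_prod_type]

theorem finProdFinEquiv_val_div {μ n : ℕ} (i : Fin μ) (t : Fin n) :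
    (finProdFinEquiv (i, t) : ℕ) / n = i :=
  congrArg (fun p => (p.1 : ℕ)) (finProdFinEquiv.symm_apply_apply (i, t))

section BlaumPlank

variable {μ n r N : ℕ} (hn : 0 < n) {F : Type*} [Field F] (β : Fˣ) (L : Fin n → ℕ)
  {a : Fin (μ * n) → F}

theorem finProdFinEquiv_modNat (i : Fin μ) (t : Fin n) :
    (⟨(finProdFinEquiv (i, t) : ℕ) % n, Nat.mod_lt _ hn⟩ : Fin n) = t :=
  congrArg Prod.snd (finProdFinEquiv.symm_apply_apply (i, t))

theorem blaumH_apply_local (i : Fin μ) {u : ℕ} (hu : u < r) (hρ : u + r * i < r * μ + 2)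
    (j : Fin μ) (t : Fin n) :
    blaumH μ n r N hn β L ⟨u + r * i, hρ⟩ (finProdFinEquiv (j, t)) =
      if j = i then ((β ^ L t : Fˣ) : F) ^ u else 0 := by
  have hlt : u + r * i < r * μ := by
    have : r * (i + 1) ≤ r * μ := Nat.mul_le_mul_left r i.2
    linarith
  have hdiv : (u + r * i) / r = i := by
    rw [Nat.add_mul_div_left _ _ (by omega), Nat.div_eq_of_lt hu, zero_add]
  have hmod : (u + r * i) % r = u := by rw [Nat.add_mul_mod_self_left, Nat.mod_eq_of_lt hu]
  simp only [blaumH, finProdFinEquiv_modNat hn, finProdFinEquiv_val_div, hdiv, hmod, if_pos hlt,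
    Fin.val_inj]
  split_ifs <;> simp [mul_comm u, pow_mul]

theorem blaumH_apply_global (hρ : r * μ < r * μ + 2) (j : Fin μ) (t : Fin n) :
    blaumH μ n r N hn β L ⟨r * μ, hρ⟩ (finProdFinEquiv (j, t)) = ((β ^ L t : Fˣ) : F) ^ r := by
  simp only [blaumH, finProdFinEquiv_modNat hn, lt_irrefl, if_false, if_true]
  simp [mul_comm r, pow_mul]

theorem blaumH_apply_last (hρ : r * μ + 1 < r * μ + 2) (j : Fin μ) (t : Fin n) :
    blaumH μ n r N hn β L ⟨r * μ + 1, hρ⟩ (finProdFinEquiv (j, t)) =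
      ((β ^ (-((j : ℤ) * N)) : Fˣ) : F) * ((β ^ L t : Fˣ) : F)⁻¹ := by
  have hdiv : ((finProdFinEquiv (j, t) : ℕ) : ℤ) / n = j := by
    rw [← Int.natCast_div, finProdFinEquiv_val_div]
  simp only [blaumH, finProdFinEquiv_modNat hn, hdiv, show ¬r * μ + 1 < r * μ by omega,
    show r * μ + 1 ≠ r * μ by omega, if_false]
  simp [_root_.zpow_sub]

theorem sum_mul_pow_eq_zero_of_blaumH_mulVec_eq_zero (ha : blaumH μ n r N hn β L *ᵥ a = 0)
    (i : Fin μ) {u : ℕ} (hu : u < r) :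
    ∑ t, a (finProdFinEquiv (i, t)) * ((β ^ L t : Fˣ) : F) ^ u = 0 := by
  have hρ : u + r * i < r * μ + 2 := by
    have : r * (i + 1) ≤ r * μ := Nat.mul_le_mul_left r i.2
    linarith
  have h := congrFun ha ⟨u + r * i, hρ⟩
  rw [mulVec_finProdFinEquiv, Fintype.sum_eq_single i fun j hj => by
    simp [blaumH_apply_local hn β L i hu hρ, hj]] at h
  simpa [blaumH_apply_local hn β L i hu hρ, mul_comm] using h

theorem sum_sum_mul_pow_eq_zero_of_blaumH_mulVec_eq_zero
    (ha : blaumH μ n r N hn β L *ᵥ a = 0) :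
    ∑ i : Fin μ, ∑ t, a (finProdFinEquiv (i, t)) * ((β ^ L t : Fˣ) : F) ^ r = 0 := by
  have h := congrFun ha ⟨r * μ, by omega⟩
  simp only [mulVec_finProdFinEquiv, blaumH_apply_global, Pi.zero_apply] at h
  simpa only [mul_comm] using h

theorem sum_mul_sum_mul_inv_eq_zero_of_blaumH_mulVec_eq_zero
    (ha : blaumH μ n r N hn β L *ᵥ a = 0) :
    ∑ i : Fin μ, ((β ^ (-((i : ℤ) * N)) : Fˣ) : F) *
      ∑ t, a (finProdFinEquiv (i, t)) * ((β ^ L t : Fˣ) : F)⁻¹ = 0 := by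
  have h := congrFun ha ⟨r * μ + 1, by omega⟩
  simp only [mulVec_finProdFinEquiv, blaumH_apply_last, Pi.zero_apply] at h
  rw [← h]
  simp_rw [Finset.mul_sum]
  exact Fintype.sum_congr _ _ fun i => Fintype.sum_congr _ _ fun t => by ring

end BlaumPlank

theorem eq_of_blaumH_locator_mul_eq {μ n N : ℕ} {F : Type*} [Field F] {β : Fˣ}
    (hβ : μ * N ≤ orderOf β) {L : Fin n → ℕ} (hLN : ∀ t, L t < N) {i j : Fin μ}
    {t t' : Fin n}
    (h : ((β ^ L t : Fˣ) : F) * ((β ^ (-((j : ℤ) * N)) : Fˣ) : F) =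
      ((β ^ L t' : Fˣ) : F) * ((β ^ (-((i : ℤ) * N)) : Fˣ) : F)) :
    i = j ∧ L t = L t' := by
  have h' : β ^ (L t : ℤ) * β ^ (-((j : ℤ) * N)) = β ^ (L t' : ℤ) * β ^ (-((i : ℤ) * N)) :=
    Units.ext (by simpa using h)
  have hpow : β ^ (L t + i * N) = β ^ (L t' + j * N) := by
    rw [← zpow_natCast, ← zpow_natCast]
    push_cast
    calc β ^ ((L t : ℤ) + i * N)
        = β ^ (L t : ℤ) * β ^ (-((j : ℤ) * N)) * β ^ ((i : ℤ) * N + j * N) := by group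
      _ = β ^ (L t' : ℤ) * β ^ (-((i : ℤ) * N)) * β ^ ((i : ℤ) * N + j * N) := by rw [h']
      _ = β ^ ((L t' : ℤ) + j * N) := by group
  have hbound : ∀ (k : Fin μ) (s : Fin n), L s + k * N < orderOf β := fun k s =>
    calc L s + k * N < N + k * N := Nat.add_lt_add_right (hLN s) _
      _ = (k + 1) * N := by ring
      _ ≤ μ * N := Nat.mul_le_mul_right N k.2
      _ ≤ orderOf β := hβ
  have heq := pow_injOn_Iio_orderOf (hbound i t) (hbound j t') hpow
  have hN : 0 < N := (Nat.zero_le _).trans_lt (hLN t)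
  refine ⟨Fin.ext ?_, ?_⟩
  · have := congrArg (· / N) heq
    simpa [Nat.add_mul_div_right _ _ hN, Nat.div_eq_of_lt (hLN t), Nat.div_eq_of_lt (hLN t')]
      using this
  · have := congrArg (· % N) heq
    simpa [Nat.mod_eq_of_lt (hLN t), Nat.mod_eq_of_lt (hLN t')] using this

theorem statement1_general (μ n r N : ℕ) (hμ : 0 < μ) (hn : 0 < n) (F : Type*) [Field F]
    (β : Fˣ) (hβ : μ * N ≤ orderOf β) (L : Fin n → ℕ) (hL : Function.Injective L)
    (hNbound : Finset.univ.sup L + 1 ≤ N) :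
    sdCriterion μ n r 2 hn (blaumH μ n r N hn β L) := by
  intro T hT Fs hFs hFsT e he hrange
  have hLN : ∀ t, L t < N := fun t => (le_sup (mem_univ t)).trans_lt hNbound
  have hz : Function.Injective fun t => ((β ^ L t : Fˣ) : F) := fun t t' h =>
    hL (eq_of_blaumH_locator_mul_eq hβ hLN (i := ⟨0, hμ⟩) (j := ⟨0, hμ⟩) (congrArg (· * _) h)).2
  refine isUnit_det_submatrix_of_forall_mulVec_eq_zero he fun a ha hsupp => ?_
  obtain ⟨c₁, c₂, hc, rfl⟩ := card_eq_two.mp hFs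
  have hA : ∀ i t, t ∉ T → (i, t) ≠ finProdFinEquiv.symm c₁ →
      (i, t) ≠ finProdFinEquiv.symm c₂ → a (finProdFinEquiv (i, t)) = 0 := by
    intro i t ht h₁ h₂
    by_contra hne
    have hmem := hrange ▸ hsupp _ hne
    simp only [Set.mem_union, Set.mem_ofPred_eq, finProdFinEquiv_modNat hn, coe_insert,
      coe_singleton, Set.mem_insert_iff, Set.mem_singleton_iff, ← Equiv.eq_symm_apply] at hmem
    tauto
  have hA0 := eq_zero_of_sectorDisk_equations (fun t => Units.ne_zero _) hz
    (fun i => Units.ne_zero _) (fun i j t t' hij h => hij (eq_of_blaumH_locator_mul_eq hβ hLN h).1)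
    T (finProdFinEquiv.symm.injective.ne hc) (hFsT c₁ (by simp)) (hFsT c₂ (by simp)) hA
    (hT ▸ fun i u hu => sum_mul_pow_eq_zero_of_blaumH_mulVec_eq_zero hn β L ha i hu)
    (hT ▸ sum_sum_mul_pow_eq_zero_of_blaumH_mulVec_eq_zero hn β L ha)
    (sum_mul_sum_mul_inv_eq_zero_of_blaumH_mulVec_eq_zero hn β L ha)
  funext c
  simpa only [Prod.mk.eta, Equiv.apply_symm_apply, Pi.zero_apply] using
    congrFun₂ hA0 (finProdFinEquiv.symm c).1 (finProdFinEquiv.symm c).2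

/-- Let `w, μ, n, r, N` be positive integers with `2 ≤ r+1 ≤ n`, let
`F = GF(2^w)`, and let `β ∈ F` have multiplicative order at least `μN`. Let
`L = {i₁, …, i_n}` be `n` distinct non-negative integers and `H` the generalized
Blaum–Plank parity-check matrix for these data. If `N ≥ (maxᵢ L i) + 1`, then `H`
satisfies the `(r, s = 2)` sector-disk criterion. -/
theorem statement1 (w μ n r N : ℕ) (hw : 0 < w) (hμ : 0 < μ) (hr : 0 < r) (hN : 0 < N)
    (hn : 0 < n) (hrn : r + 1 ≤ n)
    (F : Type*) [Field F] [Fintype F] (hF : Fintype.card F = 2 ^ w)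
    (β : Fˣ) (hβ : μ * N ≤ orderOf β)
    (L : Fin n → ℕ) (hL : Function.Injective L)
    (hNbound : Finset.univ.sup L + 1 ≤ N) :
    sdCriterion μ n r 2 hn (blaumH μ n r N hn β L) :=
  statement1_general μ n r N hμ hn F β hβ L hL hNbound
end

section
/- Let μ, n, r, d be positive integers with r ≤ n and n−r ≤ d ≤ n−1, set b = d+1−(n−r), N = (r+1)(rn−1−r)+1, and let q = 2^w satisfy q ≥ max{μN, bn}. Let β ∈ GF(q) have multiplicative order O(β) ≥ max{μN, bn} and set β_{i,j} = β^{(i−1)+(j−1)n} for 1 ≤ i ≤ n, 1 ≤ j ≤ b. Then for every a ∈ {0, 1, …, b^n − 1} with base-b digit expansion a = Σ_{i=1}^n a_i b^{i−1} (a_i ∈ {0,…,b−1}), the matrix H^{(a)} of Construction 1 satisfies the (r, s=2) partial-MDS criterion: for every choice of subsets E_i ⊆ W_i with |E_i| = r for i = 1, …, μ, and every 2-element set F ⊆ {1, …, μn} \ (∪_i E_i), the (rμ+2) × (rμ+2) submatrix of H^{(a)} formed by the columns indexed by (∪_i E_i) ∪ F is invertible. -/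
/-- The parity-check matrix `H^(a)` of Construction 1 (locally `d`-MSR PMDS/SD array
codes), of size `(rμ+2) × (μn)` over a field `F`, for the row index `a` with base-`b`
digits `a_t = (a / b^t) % b` (0-indexed `t`).  With `β_{t, a_t+1} = β^(t + a_t · n)`,
rows `0, …, rμ-1` form the `μ` diagonal Vandermonde blocks `H₀^(a)` with entries
`β_{t,a_t+1}^u` (block `i = v / r`, row-within-block `u = v % r`); row `rμ` has entries
`β_{t,a_t+1}^r`; row `rμ+1` has entries `β^(-jN) · β_{t,a_t+1}⁻¹`, where `j = c / n`
is the (0-indexed) local group of column `c`. -/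
noncomputable def construction1H (μ n r N b : ℕ) (hn : 0 < n) {F : Type*} [Field F]
    (β : Fˣ) (a : ℕ) :
    Matrix (Fin (r * μ + 2)) (Fin (μ * n)) F :=
  fun v c =>
    if (v : ℕ) < r * μ then
      if (c : ℕ) / n = (v : ℕ) / r then
        (((β ^ ((c : ℕ) % n + a / b ^ ((c : ℕ) % n) % b * n)) ^ ((v : ℕ) % r) : Fˣ) : F)
      else 0
    else if (v : ℕ) = r * μ then
      (((β ^ ((c : ℕ) % n + a / b ^ ((c : ℕ) % n) % b * n)) ^ r : Fˣ) : F)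
    else
      ((β ^ (-(((c : ℕ) / n : ℤ) * (N : ℤ))) *
        (β ^ ((c : ℕ) % n + a / b ^ ((c : ℕ) % n) % b * n))⁻¹ : Fˣ) : F)

/-- The `(r, s)` partial-MDS criterion for a matrix with `rμ + s` rows and `μn` columns,
where the columns are partitioned into `μ` local groups `W_i = {c : c / n = i}`:
for every choice of `E_i ⊆ W_i` with `|E_i| = r` and every `s`-element set `Fs` of columns
disjoint from all `E_i`, the square submatrix on the columns `(∪ᵢ E_i) ∪ Fs` is invertible. -/
def pmdsCriterion {F : Type*} [Field F] (μ n r s : ℕ)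
    (H : Matrix (Fin (r * μ + s)) (Fin (μ * n)) F) : Prop :=
  ∀ E : Fin μ → Finset (Fin (μ * n)),
    (∀ i, (E i).card = r) →
    (∀ i, ∀ c ∈ E i, (c : ℕ) / n = (i : ℕ)) →
    ∀ Fs : Finset (Fin (μ * n)),
      Fs.card = s →
      (∀ i, Disjoint Fs (E i)) →
      ∀ e : Fin (r * μ + s) → Fin (μ * n),
        Function.Injective e →
        (Set.range e = ↑(Finset.univ.biUnion E ∪ Fs)) →
        IsUnit (H.submatrix id e).det

/-!
A vector `v` in the kernel of the selected columns satisfies, in each local group, the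
Vandermonde equations `∑ x_j ^ u v_j = 0` (`u < r`) in the nodes `x_j = β ^ (t + a_t n)`, which are
distinct within a group because `bn ≤ orderOf β`, together with the two global equations
`∑ x_j ^ r v_j = 0` and `∑ β ^ (-gN) x_j⁻¹ v_j = 0`. A group made of its `r` columns from `E_g`
alone is killed by its Vandermonde system. If both extra columns lie in one group, its `r + 2`
columns satisfy the power-sum equations of orders `-1, 0, …, r`, again a Vandermonde system.
If they lie in two groups `g₁ ≠ g₂` of `r + 1` columns each, the divided-difference identity
`(-1) ^ r (∏ x_j) ∑ x_j⁻¹ v_j = ∑ x_j ^ r v_j` on each group turns the global equations into a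
`2 × 2` system with determinant `β ^ (-g₁N) P₂ - β ^ (-g₂N) P₁`, `P_i = ∏ x_j = β ^ S_i`. The sum
`S_i` of `r + 1` distinct exponents below `bn ≤ rn` lies in a window of length `N`, so the two
exponents `S_i - g_j N` differ by a nonzero amount less than `μN ≤ orderOf β`: the determinant is
nonzero.
-/

open Finset Polynomial

section PowerSums

variable {ι : Type*} {s : Finset ι}

theorem sum_eval_mul_eq_zero_of_degree_lt {R : Type*} [CommRing R] {x v : ι → R} {k : ℕ}
    (h : ∀ u < k, ∑ j ∈ s, x j ^ u * v j = 0) {p : R[X]} (hp : p.degree < k) :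
    ∑ j ∈ s, p.eval (x j) * v j = 0 := by
  rcases eq_or_ne p 0 with rfl | hp0
  · simp
  simp_rw [eval_eq_sum_range' ((natDegree_lt_iff_degree_lt hp0).mpr hp), sum_mul]
  rw [sum_comm]
  refine sum_eq_zero fun u hu => ?_
  simp_rw [mul_assoc, ← mul_sum, h u (mem_range.mp hu), mul_zero]

variable {F : Type*} [Field F] {x v : ι → F}

theorem eq_zero_of_sum_pow_mul_eq_zero [DecidableEq ι] (hx : Set.InjOn x s)
    (h : ∀ u < #s, ∑ j ∈ s, x j ^ u * v j = 0) {i : ι} (hi : i ∈ s) : v i = 0 := by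
  have hdeg : (Lagrange.nodal (s.erase i) x).degree < #s := by
    rw [Lagrange.degree_nodal, card_erase_of_mem hi, Nat.cast_lt]
    exact Nat.sub_lt (card_pos.mpr ⟨i, hi⟩) one_pos
  have hsum := sum_eval_mul_eq_zero_of_degree_lt h hdeg
  rw [sum_eq_single_of_mem i hi fun j hj hji => by
    rw [Lagrange.eval_nodal_at_node (mem_erase.mpr ⟨hji, hj⟩), zero_mul]] at hsum
  refine (mul_eq_zero.mp hsum).resolve_left (Lagrange.eval_nodal_not_at_node fun j hj => ?_)
  exact fun hij => (mem_erase.mp hj).1 (hx (mem_of_mem_erase hj) hi hij.symm)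

theorem neg_one_pow_mul_prod_mul_sum_inv_mul {r : ℕ} (hs : #s = r + 1) (hx : ∀ j ∈ s, x j ≠ 0)
    (h : ∀ u < r, ∑ j ∈ s, x j ^ u * v j = 0) :
    (-1) ^ r * (∏ j ∈ s, x j) * ∑ j ∈ s, (x j)⁻¹ * v j = ∑ j ∈ s, x j ^ r * v j := by
  set P := Lagrange.nodal s x
  have hP : P.natDegree = r + 1 := by rw [Lagrange.natDegree_nodal, hs]
  -- `P = divX P * X + P(0)` vanishes at the nodes, so `divX P = -P(0) / X` there, while
  -- `divX P - X ^ r` has degree `< r` and is annihilated by the power sums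
  have hdivX : ∀ j ∈ s, P.divX.eval (x j) = (-1) ^ r * (∏ i ∈ s, x i) * (x j)⁻¹ := by
    intro j hj
    have h0 := congrArg (eval (x j)) (divX_mul_X_add P)
    rw [Lagrange.eval_nodal_at_node hj, eval_add, eval_mul, eval_X, eval_C, coeff_zero_eq_eval_zero,
      Lagrange.eval_nodal] at h0
    simp_rw [zero_sub, prod_neg, hs, pow_succ] at h0
    field_simp [hx j hj]
    linear_combination h0
  have hdeg : (P.divX - X ^ r).degree < ↑r := by
    refine (degree_lt_iff_coeff_zero _ _).mpr fun m hm => ?_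
    rw [coeff_sub, coeff_divX, coeff_X_pow]
    rcases hm.eq_or_lt with rfl | hm
    · rw [← hP, (Lagrange.nodal_monic).coeff_natDegree, if_pos rfl, sub_self]
    · rw [coeff_eq_zero_of_natDegree_lt (by omega), if_neg hm.ne', sub_self]
  have hsum := sum_eval_mul_eq_zero_of_degree_lt h hdeg
  simp_rw [eval_sub, eval_pow, eval_X, sub_mul, sum_sub_distrib, sub_eq_zero] at hsum
  rw [← hsum, mul_sum]
  exact sum_congr rfl fun j hj => by rw [hdivX j hj]; ring

theorem eq_zero_of_sum_pow_mul_eq_zero_of_sum_inv_mul_eq_zero [DecidableEq ι] {r : ℕ}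
    (hs : #s = r + 2) (hx : Set.InjOn x s) (hx0 : ∀ j ∈ s, x j ≠ 0)
    (hpow : ∀ u ≤ r, ∑ j ∈ s, x j ^ u * v j = 0) (hinv : ∑ j ∈ s, (x j)⁻¹ * v j = 0)
    {i : ι} (hi : i ∈ s) : v i = 0 := by
  have hw : ∀ u < #s, ∑ j ∈ s, x j ^ u * ((x j)⁻¹ * v j) = 0 := by
    rintro (_ | u) hu
    · simpa using hinv
    · rw [← hpow u (by omega)]
      exact sum_congr rfl fun j hj => by field_simp [hx0 j hj]; ring
  simpa [hx0 i hi] using eq_zero_of_sum_pow_mul_eq_zero hx hw hi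

theorem eq_zero_of_sum_pow_mul_eq_zero_of_card_eq_succ [DecidableEq ι] {r : ℕ}
    (hs : #s = r + 1) (hx : Set.InjOn x s) (hloc : ∀ u < r, ∑ j ∈ s, x j ^ u * v j = 0)
    (hpow : ∑ j ∈ s, x j ^ r * v j = 0) {i : ι} (hi : i ∈ s) : v i = 0 :=
  eq_zero_of_sum_pow_mul_eq_zero hx
    (fun u hu => (Nat.lt_succ_iff_lt_or_eq.mp (by omega)).elim (hloc u) fun h => h ▸ hpow) hi

theorem eq_zero_on_union_of_sum_pow_mul_add_eq_zero [DecidableEq ι] {r : ℕ}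
    {t : Finset ι} (hs : #s = r + 1) (ht : #t = r + 1) (hxs : Set.InjOn x s)
    (hxt : Set.InjOn x t) (hx0 : ∀ j, x j ≠ 0)
    (hlocs : ∀ u < r, ∑ j ∈ s, x j ^ u * v j = 0) (hloct : ∀ u < r, ∑ j ∈ t, x j ^ u * v j = 0)
    {cs ct : F} (hpow : ∑ j ∈ s, x j ^ r * v j + ∑ j ∈ t, x j ^ r * v j = 0)
    (hinv : cs * ∑ j ∈ s, (x j)⁻¹ * v j + ct * ∑ j ∈ t, (x j)⁻¹ * v j = 0)
    (hgap : cs * ∏ j ∈ t, x j ≠ ct * ∏ j ∈ s, x j) {i : ι} (hi : i ∈ s ∪ t) : v i = 0 := by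
  have hds := neg_one_pow_mul_prod_mul_sum_inv_mul hs (fun j _ => hx0 j) hlocs
  have hdt := neg_one_pow_mul_prod_mul_sum_inv_mul ht (fun j _ => hx0 j) hloct
  -- `A_s (c_s P_t - c_t P_s) = (-1) ^ r P_s P_t (c_s B_s + c_t B_t)` for `A = ∑ x ^ r v`,
  -- `B = ∑ x⁻¹ v`, `P = ∏ x`
  have hAs : ∑ j ∈ s, x j ^ r * v j = 0 := by
    refine (mul_eq_zero.mp ?_).resolve_right (sub_ne_zero.mpr hgap)
    linear_combination (-1) ^ r * (∏ j ∈ s, x j) * (∏ j ∈ t, x j) * hinv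
      - ct * (∏ j ∈ s, x j) * hpow - cs * (∏ j ∈ t, x j) * hds - ct * (∏ j ∈ s, x j) * hdt
  have hAt : ∑ j ∈ t, x j ^ r * v j = 0 := by linear_combination hpow - hAs
  rcases mem_union.mp hi with hi | hi
  · exact eq_zero_of_sum_pow_mul_eq_zero_of_card_eq_succ hs hxs hlocs hAs hi
  · exact eq_zero_of_sum_pow_mul_eq_zero_of_card_eq_succ ht hxt hloct hAt hi

end PowerSums

section LocalGroups

variable {ι F : Type*} [Fintype ι] [Field F]

def localGroup (grp : ι → ℕ) (g : ℕ) : Finset ι := {j | grp j = g}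

variable {grp : ι → ℕ}

@[simp]
theorem mem_localGroup {g : ℕ} {j : ι} : j ∈ localGroup grp g ↔ grp j = g := by
  simp [localGroup]

theorem sum_localGroup_eq_sum {g : ℕ} {f : ι → F} (hf : ∀ j, grp j ≠ g → f j = 0) :
    ∑ j ∈ localGroup grp g, f j = ∑ j, f j :=
  sum_subset (subset_univ _) fun j _ hj => hf j (mt mem_localGroup.mpr hj)

theorem sum_localGroup_add_sum_localGroup_eq_sum [DecidableEq ι] {g₁ g₂ : ℕ} (hg : g₁ ≠ g₂)
    {f : ι → F} (hf : ∀ j, grp j ≠ g₁ → grp j ≠ g₂ → f j = 0) :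
    ∑ j ∈ localGroup grp g₁, f j + ∑ j ∈ localGroup grp g₂, f j = ∑ j, f j := by
  rw [← sum_union (disjoint_left.mpr fun j h₁ h₂ =>
    hg ((mem_localGroup.mp h₁).symm.trans (mem_localGroup.mp h₂)))]
  refine sum_subset (subset_univ _) fun j _ hj => ?_
  simp only [mem_union, mem_localGroup, not_or] at hj
  exact hf j hj.1 hj.2

theorem sum_localGroup_mul_eq_mul_sum (γ : ℕ → F) (g : ℕ) (f : ι → F) :
    ∑ j ∈ localGroup grp g, γ (grp j) * f j = γ g * ∑ j ∈ localGroup grp g, f j := by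
  rw [mul_sum]
  exact sum_congr rfl fun j hj => by rw [mem_localGroup.mp hj]

variable {r : ℕ} {x : ι → F} {γ : ℕ → F} {v : ι → F}

theorem eq_zero_of_supported_on_localGroup [DecidableEq ι] {g : ℕ}
    (hcard : #(localGroup grp g) = r + 2) (hx : Set.InjOn x (localGroup grp g))
    (hx0 : ∀ j, x j ≠ 0) (hγ : γ g ≠ 0)
    (hloc : ∀ u < r, ∑ j ∈ localGroup grp g, x j ^ u * v j = 0)
    (hpow : ∑ j, x j ^ r * v j = 0) (hinv : ∑ j, γ (grp j) * (x j)⁻¹ * v j = 0)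
    (hsupp : ∀ j, grp j ≠ g → v j = 0) : v = 0 := by
  have hpow' : ∀ u ≤ r, ∑ j ∈ localGroup grp g, x j ^ u * v j = 0 := by
    intro u hu
    rcases hu.lt_or_eq with hu | rfl
    · exact hloc u hu
    · rwa [sum_localGroup_eq_sum fun j h => by rw [hsupp j h, mul_zero]]
  have hinv' : ∑ j ∈ localGroup grp g, (x j)⁻¹ * v j = 0 := by
    simp_rw [mul_assoc] at hinv
    rw [← sum_localGroup_eq_sum (g := g) fun j h => by rw [hsupp j h, mul_zero, mul_zero],
      sum_localGroup_mul_eq_mul_sum] at hinv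
    exact (mul_eq_zero.mp hinv).resolve_left hγ
  funext i
  by_cases hi : grp i = g
  · exact eq_zero_of_sum_pow_mul_eq_zero_of_sum_inv_mul_eq_zero hcard hx (fun j _ => hx0 j)
      hpow' hinv' (mem_localGroup.mpr hi)
  · exact hsupp i hi

theorem eq_zero_of_supported_on_two_localGroups [DecidableEq ι] {g₁ g₂ : ℕ} (hg : g₁ ≠ g₂)
    (hcard₁ : #(localGroup grp g₁) = r + 1) (hcard₂ : #(localGroup grp g₂) = r + 1)
    (hx₁ : Set.InjOn x (localGroup grp g₁)) (hx₂ : Set.InjOn x (localGroup grp g₂))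
    (hx0 : ∀ j, x j ≠ 0)
    (hloc₁ : ∀ u < r, ∑ j ∈ localGroup grp g₁, x j ^ u * v j = 0)
    (hloc₂ : ∀ u < r, ∑ j ∈ localGroup grp g₂, x j ^ u * v j = 0)
    (hpow : ∑ j, x j ^ r * v j = 0) (hinv : ∑ j, γ (grp j) * (x j)⁻¹ * v j = 0)
    (hgap : γ g₁ * ∏ j ∈ localGroup grp g₂, x j ≠ γ g₂ * ∏ j ∈ localGroup grp g₁, x j)
    (hsupp : ∀ j, grp j ≠ g₁ → grp j ≠ g₂ → v j = 0) : v = 0 := by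
  rw [← sum_localGroup_add_sum_localGroup_eq_sum hg fun j h₁ h₂ => by
    rw [hsupp j h₁ h₂, mul_zero]] at hpow
  simp_rw [mul_assoc] at hinv
  rw [← sum_localGroup_add_sum_localGroup_eq_sum hg fun j h₁ h₂ => by
    rw [hsupp j h₁ h₂, mul_zero, mul_zero], sum_localGroup_mul_eq_mul_sum,
    sum_localGroup_mul_eq_mul_sum] at hinv
  funext i
  by_cases hi : grp i = g₁ ∨ grp i = g₂
  · exact eq_zero_on_union_of_sum_pow_mul_add_eq_zero hcard₁ hcard₂ hx₁ hx₂ hx0 hloc₁ hloc₂ hpow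
      hinv hgap (by simpa using hi)
  · exact (not_or.mp hi).elim (hsupp i)

theorem eq_zero_of_local_and_global_sums [DecidableEq ι] {J : Finset ι} (hJ : #J = 2)
    (hcard : ∀ j, #(localGroup grp (grp j)) = r + #{i ∈ J | grp i = grp j})
    (hx : ∀ g, Set.InjOn x (localGroup grp g)) (hx0 : ∀ j, x j ≠ 0) (hγ : ∀ g, γ g ≠ 0)
    (hloc : ∀ j, ∀ u < r, ∑ i ∈ localGroup grp (grp j), x i ^ u * v i = 0)
    (hpow : ∑ j, x j ^ r * v j = 0) (hinv : ∑ j, γ (grp j) * (x j)⁻¹ * v j = 0)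
    (hgap : ∀ g₁ g₂, g₁ ≠ g₂ → #(localGroup grp g₁) = r + 1 → #(localGroup grp g₂) = r + 1 →
      γ g₁ * ∏ j ∈ localGroup grp g₂, x j ≠ γ g₂ * ∏ j ∈ localGroup grp g₁, x j) :
    v = 0 := by
  obtain ⟨j₁, j₂, hj, rfl⟩ := card_eq_two.mp hJ
  have hsupp : ∀ j, grp j ≠ grp j₁ → grp j ≠ grp j₂ → v j = 0 := by
    intro j h₁ h₂
    have hr : #(localGroup grp (grp j)) = r := by
      rw [hcard, filter_insert, filter_singleton, if_neg (Ne.symm h₁), if_neg (Ne.symm h₂)]; rfl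
    exact eq_zero_of_sum_pow_mul_eq_zero (hx _) (hr ▸ hloc j) (mem_localGroup.mpr rfl)
  have hcard₁ := hcard j₁
  have hcard₂ := hcard j₂
  by_cases hg : grp j₁ = grp j₂
  · rw [filter_true_of_mem (by simp [hg]), card_pair hj] at hcard₁
    exact eq_zero_of_supported_on_localGroup hcard₁ (hx _) hx0 (hγ _) (hloc j₁) hpow hinv
      fun j h => hsupp j h (hg ▸ h)
  · rw [filter_insert, filter_singleton, if_pos rfl, if_neg (Ne.symm hg)] at hcard₁
    rw [filter_insert, filter_singleton, if_pos rfl, if_neg hg] at hcard₂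
    exact eq_zero_of_supported_on_two_localGroups hg hcard₁ hcard₂ (hx _) (hx _) hx0 (hloc j₁)
      (hloc j₂) hpow hinv (hgap _ _ hg hcard₁ hcard₂) hsupp

end LocalGroups

theorem sum_range_card_le_sum (s : Finset ℕ) : ∑ i ∈ range #s, i ≤ ∑ i ∈ s, i := by
  have := Finset.sum_range_le_sum (s := s.map Nat.castEmbedding) (c := 0) (by simp)
  simp only [card_map, zero_add, sum_map, Nat.castEmbedding_apply] at this
  zify
  exact this

theorem sum_le_sum_range_card_add {s : Finset ℕ} {m : ℕ} (hs : ∀ i ∈ s, i < m) :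
    ∑ i ∈ s, i ≤ ∑ i ∈ range #s, i + #s * (m - #s) := by
  have hsm : #s ≤ m := by
    simpa using card_le_card (show s ⊆ range m from fun i hi => mem_range.mpr (hs i hi))
  have hup := Finset.sum_le_sum_range (s := s.map Nat.castEmbedding) (c := m - 1)
    (by simpa using hs)
  have hgauss := Finset.sum_range_id_mul_two #s
  simp only [card_map, sum_map, Nat.castEmbedding_apply, sum_sub_distrib, sum_const, card_range,
    nsmul_eq_mul] at hup
  rcases (#s).eq_zero_or_pos with h | h
  · simp_all
  zify [hsm, h] at hgauss ⊢
  linarith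

theorem zpow_neg_mul_mul_pow_ne {G : Type*} [CommGroup G] {β : G} {μ N g₁ g₂ L S₁ S₂ : ℕ}
    (hβ : μ * N ≤ orderOf β) (hg₁ : g₁ < μ) (hg₂ : g₂ < μ) (hg : g₁ ≠ g₂)
    (hS₁ : L ≤ S₁ ∧ S₁ < L + N) (hS₂ : L ≤ S₂ ∧ S₂ < L + N) :
    β ^ (-((g₁ : ℤ) * N)) * β ^ S₂ ≠ β ^ (-((g₂ : ℤ) * N)) * β ^ S₁ := by
  intro h
  -- the two exponents differ by less than `μN ≤ orderOf β`, and by at least `N - |S₁ - S₂| > 0`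
  rw [← zpow_natCast, ← zpow_natCast, ← zpow_add, ← zpow_add, zpow_eq_zpow_iff_modEq] at h
  have hlt : |(-(g₂ : ℤ) * N + S₁) - (-(g₁ : ℤ) * N + S₂)| < orderOf β := by
    refine lt_of_lt_of_le ?_ (Int.ofNat_le.mpr hβ)
    have : (0 : ℤ) ≤ N := by positivity
    rw [abs_lt, Nat.cast_mul]
    constructor <;> nlinarith
  have h0 := Int.eq_zero_of_abs_lt_dvd (by simpa using h.dvd) hlt
  rcases Nat.lt_or_gt_of_ne hg with hg | hg <;> nlinarith

/-- `β ^ nodeExponent n b a c` is the node `β_{t, a_t + 1} = β ^ (t + a_t n)` of column `c`,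
where `t = c % n` is its position in its local group and `a_t` the `t`-th base-`b` digit
of `a`. -/
def nodeExponent (n b a c : ℕ) : ℕ := c % n + a / b ^ (c % n) % b * n

theorem nodeExponent_lt {n b : ℕ} (hn : 0 < n) (hb : 0 < b) (a c : ℕ) :
    nodeExponent n b a c < b * n := by
  have h₁ : c % n < n := Nat.mod_lt c hn
  have h₂ : a / b ^ (c % n) % b * n ≤ (b - 1) * n :=
    Nat.mul_le_mul_right n (Nat.le_sub_one_of_lt (Nat.mod_lt _ hb))
  have h₃ : (b - 1) * n + n = b * n := by
    rw [← Nat.succ_mul, Nat.succ_eq_add_one, Nat.sub_add_cancel hb]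
  unfold nodeExponent
  omega

theorem nodeExponent_mod (n b a c : ℕ) : nodeExponent n b a c % n = c % n := by
  rw [nodeExponent, Nat.add_mul_mod_self_right, Nat.mod_mod]

theorem eq_of_nodeExponent_eq {n b a c c' : ℕ} (hdiv : c / n = c' / n)
    (h : nodeExponent n b a c = nodeExponent n b a c') : c = c' := by
  rw [← Nat.div_add_mod c n, ← Nat.div_add_mod c' n, hdiv, ← nodeExponent_mod n b a c, h,
    nodeExponent_mod]

section Construction1

open Matrix

variable {F ι : Type*} [Field F] [Fintype ι] {μ n r N b : ℕ} (hn : 0 < n) {β : Fˣ} {a : ℕ}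

theorem construction1H_apply_of_lt {i : Fin (r * μ + 2)} (hi : (i : ℕ) < r * μ)
    (c : Fin (μ * n)) : construction1H μ n r N b hn β a i c =
      if (c : ℕ) / n = i / r then ((β ^ nodeExponent n b a c : Fˣ) : F) ^ ((i : ℕ) % r)
      else 0 := by
  simp [construction1H, hi, nodeExponent]

theorem construction1H_apply_pow (c : Fin (μ * n)) :
    construction1H μ n r N b hn β a ⟨r * μ, by omega⟩ c =
      ((β ^ nodeExponent n b a c : Fˣ) : F) ^ r := by
  simp [construction1H, nodeExponent]

theorem construction1H_apply_inv (c : Fin (μ * n)) :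
    construction1H μ n r N b hn β a ⟨r * μ + 1, by omega⟩ c =
      ((β ^ (-(((c : ℕ) / n : ℕ) * N : ℤ)) : Fˣ) : F) *
        ((β ^ nodeExponent n b a c : Fˣ) : F)⁻¹ := by
  simp [construction1H, nodeExponent]

variable {e : ι → Fin (μ * n)} {v : ι → F}

theorem sum_localGroup_pow_mul_eq_zero_of_mulVec_eq_zero
    (hv : (construction1H μ n r N b hn β a).submatrix id e *ᵥ v = 0) {g u : ℕ} (hg : g < μ)
    (hu : u < r) :
    ∑ j ∈ localGroup (fun j => (e j : ℕ) / n) g,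
      ((β ^ nodeExponent n b a (e j) : Fˣ) : F) ^ u * v j = 0 := by
  have hi : g * r + u < r * μ := by nlinarith
  have hrow := congrFun hv ⟨g * r + u, by omega⟩
  have hdiv : (g * r + u) / r = g := by
    rw [Nat.add_comm, Nat.add_mul_div_right _ _ (by omega), Nat.div_eq_of_lt hu, zero_add]
  have hmod : (g * r + u) % r = u := by rw [Nat.mul_comm, Nat.mul_add_mod, Nat.mod_eq_of_lt hu]
  simp only [mulVec, dotProduct, submatrix_apply, id_eq,
    construction1H_apply_of_lt hn (i := ⟨g * r + u, _⟩) hi, hdiv, hmod, ite_mul, zero_mul,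
    Pi.zero_apply] at hrow
  rwa [localGroup, sum_filter]

theorem sum_pow_mul_eq_zero_of_mulVec_eq_zero
    (hv : (construction1H μ n r N b hn β a).submatrix id e *ᵥ v = 0) :
    ∑ j, ((β ^ nodeExponent n b a (e j) : Fˣ) : F) ^ r * v j = 0 := by
  simpa only [mulVec, dotProduct, submatrix_apply, id_eq, construction1H_apply_pow hn,
    Pi.zero_apply] using congrFun hv ⟨r * μ, by omega⟩

theorem sum_zpow_mul_inv_mul_eq_zero_of_mulVec_eq_zero
    (hv : (construction1H μ n r N b hn β a).submatrix id e *ᵥ v = 0) :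
    ∑ j, ((β ^ (-((((e j : ℕ) / n : ℕ) : ℤ) * N)) : Fˣ) : F) *
      ((β ^ nodeExponent n b a (e j) : Fˣ) : F)⁻¹ * v j = 0 := by
  simpa only [mulVec, dotProduct, submatrix_apply, id_eq, construction1H_apply_inv hn,
    Pi.zero_apply] using congrFun hv ⟨r * μ + 1, by omega⟩

end Construction1

section Columns

variable {ι : Type*} [Fintype ι] {μ n : ℕ} {e : ι → Fin (μ * n)}

theorem injOn_nodeExponent_localGroup (he : Function.Injective e) (b a g : ℕ) :
    Set.InjOn (fun j => nodeExponent n b a (e j)) (localGroup (fun j => (e j : ℕ) / n) g) :=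
  fun _ hj _ hj' h => he <| Fin.ext <| eq_of_nodeExponent_eq
    ((mem_localGroup.mp hj).trans (mem_localGroup.mp hj').symm) h

theorem injOn_node_localGroup {F : Type*} [Field F] {β : Fˣ} {b : ℕ} (he : Function.Injective e)
    (hn : 0 < n) (hb : 0 < b) (hβ : b * n ≤ orderOf β) (a g : ℕ) :
    Set.InjOn (fun j => ((β ^ nodeExponent n b a (e j) : Fˣ) : F))
      (localGroup (fun j => (e j : ℕ) / n) g) := by
  intro j hj j' hj' h
  have hord : ∀ j, nodeExponent n b a (e j) < orderOf β := fun j =>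
    (nodeExponent_lt hn hb a _).trans_le hβ
  exact injOn_nodeExponent_localGroup he b a g hj hj'
    (pow_injOn_Iio_orderOf (hord j) (hord j') (Units.ext h))

theorem sum_nodeExponent_localGroup_mem (he : Function.Injective e) (hn : 0 < n) {r b : ℕ}
    (hb : 0 < b) (hbr : b ≤ r) (a : ℕ) {g : ℕ}
    (hcard : #(localGroup (fun j => (e j : ℕ) / n) g) = r + 1) :
    ∑ i ∈ range (r + 1), i ≤ ∑ j ∈ localGroup (fun j => (e j : ℕ) / n) g, nodeExponent n b a (e j) ∧
      ∑ j ∈ localGroup (fun j => (e j : ℕ) / n) g, nodeExponent n b a (e j) <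
        ∑ i ∈ range (r + 1), i + ((r + 1) * (r * n - 1 - r) + 1) := by
  set s := (localGroup (fun j => (e j : ℕ) / n) g).image fun j => nodeExponent n b a (e j)
  have hinj := injOn_nodeExponent_localGroup he b a g
  have hs : #s = r + 1 := by rw [card_image_of_injOn hinj, hcard]
  have hsum : ∑ j ∈ localGroup (fun j => (e j : ℕ) / n) g, nodeExponent n b a (e j) =
      ∑ i ∈ s, i :=
    (sum_image (f := fun i => i) hinj).symm
  rw [hsum]
  have hlow := sum_range_card_le_sum s
  have hup := sum_le_sum_range_card_add (s := s) (m := b * n)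
    (by simpa [s] using fun j _ => nodeExponent_lt hn hb a (e j))
  have hbn : b * n ≤ r * n := Nat.mul_le_mul_right n hbr
  have hgap : (r + 1) * (b * n - (r + 1)) ≤ (r + 1) * (r * n - 1 - r) :=
    Nat.mul_le_mul_left _ (by omega)
  rw [hs] at hlow hup
  omega

theorem zpow_mul_prod_node_localGroup_ne {F : Type*} [Field F] {β : Fˣ} {r b N : ℕ}
    (he : Function.Injective e) (hn : 0 < n) (hb : 0 < b) (hbr : b ≤ r) (a : ℕ)
    (hN : N = (r + 1) * (r * n - 1 - r) + 1) (hβ : μ * N ≤ orderOf β) {g₁ g₂ : ℕ} (hg : g₁ ≠ g₂)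
    (h₁ : #(localGroup (fun j => (e j : ℕ) / n) g₁) = r + 1)
    (h₂ : #(localGroup (fun j => (e j : ℕ) / n) g₂) = r + 1) :
    ((β ^ (-((g₁ : ℤ) * N)) : Fˣ) : F) *
        ∏ j ∈ localGroup (fun j => (e j : ℕ) / n) g₂,
          ((β ^ nodeExponent n b a (e j) : Fˣ) : F) ≠
      ((β ^ (-((g₂ : ℤ) * N)) : Fˣ) : F) *
        ∏ j ∈ localGroup (fun j => (e j : ℕ) / n) g₁,
          ((β ^ nodeExponent n b a (e j) : Fˣ) : F) := by
  have hlt : ∀ g, #(localGroup (fun j => (e j : ℕ) / n) g) = r + 1 → g < μ := fun g hg => by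
    obtain ⟨j, hj⟩ := card_pos.mp (show 0 < #(localGroup (fun j => (e j : ℕ) / n) g) by omega)
    exact mem_localGroup.mp hj ▸ Fin.coe_divNat (e j) ▸ (e j).divNat.isLt
  simp only [← Units.coe_prod, prod_pow_eq_pow_sum, ← Units.val_mul, Ne, Units.val_inj]
  subst hN
  exact zpow_neg_mul_mul_pow_ne hβ (hlt g₁ h₁) (hlt g₂ h₂) hg
    (sum_nodeExponent_localGroup_mem he hn hb hbr a h₁)
    (sum_nodeExponent_localGroup_mem he hn hb hbr a h₂)

theorem image_filter_mem_eq {Fs : Finset (Fin (μ * n))} (hFs : ↑Fs ⊆ Set.range e) :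
    ({j | e j ∈ Fs} : Finset ι).image e = Fs := by
  ext c
  simp only [mem_image, mem_filter, mem_univ, true_and]
  refine ⟨fun ⟨j, hj, hjc⟩ => hjc ▸ hj, fun hc => ?_⟩
  obtain ⟨j, rfl⟩ := hFs hc
  exact ⟨j, hc, rfl⟩

theorem card_localGroup_eq {r : ℕ} (he : Function.Injective e) {E : Fin μ → Finset (Fin (μ * n))}
    {Fs : Finset (Fin (μ * n))} (hrange : Set.range e = ↑(univ.biUnion E ∪ Fs))
    (hE : ∀ i, #(E i) = r) (hEgrp : ∀ i, ∀ c ∈ E i, (c : ℕ) / n = i)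
    (hdisj : ∀ i, Disjoint Fs (E i)) (j : ι) :
    #(localGroup (fun j => (e j : ℕ) / n) ((e j : ℕ) / n)) =
      r + #{i ∈ ({i | e i ∈ Fs} : Finset ι) | (e i : ℕ) / n = (e j : ℕ) / n} := by
  set g := (e j : ℕ) / n
  set gi : Fin μ := (e j).divNat
  have himage : univ.image e = univ.biUnion E ∪ Fs := by
    rw [← coe_inj, coe_image, coe_univ, Set.image_univ, hrange]
  have hgroup : {c ∈ univ.biUnion E | c.val / n = g} = E gi := by
    ext c
    simp only [mem_filter, mem_biUnion, mem_univ, true_and]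
    constructor
    · rintro ⟨⟨i, hi⟩, hc⟩
      rwa [show gi = i from Fin.ext (hc.symm.trans (hEgrp i c hi))]
    · exact fun hc => ⟨⟨gi, hc⟩, hEgrp gi c hc⟩
  have hextra : {c ∈ Fs | c.val / n = g} =
      {i ∈ ({i | e i ∈ Fs} : Finset ι) | (e i : ℕ) / n = g}.image e := by
    rw [← filter_image (p := fun c : Fin (μ * n) => c.val / n = g),
      image_filter_mem_eq (hrange ▸ subset_union_right)]
  rw [← card_image_of_injective _ he, localGroup,
    ← filter_image (p := fun c : Fin (μ * n) => c.val / n = g), himage, filter_union, hgroup,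
    card_union_of_disjoint ((hdisj gi).symm.mono_right (filter_subset _ _)), hE, hextra,
    card_image_of_injective _ he]

end Columns

theorem statement2_general (μ n r d b N : ℕ)
    (hn : 0 < n)
    (hdl : n - r ≤ d) (hdh : d ≤ n - 1)
    (hb : b = d + 1 - (n - r))
    (hN : N = (r + 1) * (r * n - 1 - r) + 1)
    (F : Type*) [Field F]
    (β : Fˣ) (hβ : max (μ * N) (b * n) ≤ orderOf β)
    (a : ℕ) :
    pmdsCriterion μ n r 2 (construction1H μ n r N b hn β a) := by
  intro E hE hEgrp Fs hFs hdisj e he hrange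
  have hb0 : 0 < b := by omega
  have hbr : b ≤ r := by omega
  have hFs_range : ↑Fs ⊆ Set.range e := hrange ▸ subset_union_right
  rw [isUnit_iff_ne_zero, Ne, ← Matrix.exists_mulVec_eq_zero_iff]
  rintro ⟨v, hv0, hv⟩
  exact hv0 <| eq_zero_of_local_and_global_sums (J := {j | e j ∈ Fs})
    (γ := fun g => ((β ^ (-((g : ℤ) * N)) : Fˣ) : F))
    (by rw [← card_image_of_injective _ he, image_filter_mem_eq hFs_range, hFs])
    (card_localGroup_eq he hrange hE hEgrp hdisj)
    (injOn_node_localGroup he hn hb0 (le_of_max_le_right hβ) a) (fun _ => Units.ne_zero _)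
    (fun _ => Units.ne_zero _)
    (fun j _ hu => sum_localGroup_pow_mul_eq_zero_of_mulVec_eq_zero hn hv
      (Fin.coe_divNat (e j) ▸ (e j).divNat.isLt) hu)
    (sum_pow_mul_eq_zero_of_mulVec_eq_zero hn hv)
    (sum_zpow_mul_inv_mul_eq_zero_of_mulVec_eq_zero hn hv)
    fun _ _ hg h₁ h₂ =>
      zpow_mul_prod_node_localGroup_ne he hn hb0 hbr a hN (le_of_max_le_left hβ) hg h₁ h₂

/-- Let `μ, n, r, d` be positive integers with `r ≤ n` and
`n−r ≤ d ≤ n−1`, set `b = d+1−(n−r)`, `N = (r+1)(rn−1−r)+1`, and let `q = 2^w` satisfy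
`q ≥ max{μN, bn}`. Let `β ∈ GF(q)` have multiplicative order at least `max{μN, bn}` and
set `β_{i,j} = β^((i−1)+(j−1)n)`.  Then for every `a ∈ {0, …, b^n − 1}` the matrix
`H^(a)` of Construction 1 satisfies the `(r, s = 2)` partial-MDS criterion. -/
theorem statement2 (w μ n r d b N : ℕ)
    (hw : 0 < w) (hμ : 0 < μ) (hn : 0 < n) (hr : 0 < r) (hd : 0 < d)
    (hrn : r ≤ n) (hdl : n - r ≤ d) (hdh : d ≤ n - 1)
    (hb : b = d + 1 - (n - r))
    (hN : N = (r + 1) * (r * n - 1 - r) + 1)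
    (F : Type*) [Field F] [Fintype F] (hF : Fintype.card F = 2 ^ w)
    (hq : max (μ * N) (b * n) ≤ 2 ^ w)
    (β : Fˣ) (hβ : max (μ * N) (b * n) ≤ orderOf β)
    (a : ℕ) (ha : a < b ^ n) :
    pmdsCriterion μ n r 2 (construction1H μ n r N b hn β a) :=
  statement2_general μ n r d b N hn hdl hdh hb hN F β hβ a
end

section
/- Let r, m, μ be positive integers with r ≤ m, set N = (r+1)(m−r) + 1, and let 1 ≤ z ≤ μ−1. Let j_1 < … < j_{r+1} and j'_1 < … < j'_{r+1} be integers in [0, m], with sums S = Σ_u j_u and S' = Σ_u j'_u. Then 1 ≤ Nz + S' − S ≤ Nμ − 1. Consequently, if β is an element of a finite field with multiplicative order O(β) ≥ μN, then β^{Nz + S' − S} ≠ 1. -/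
/-!
A strictly increasing sequence `j₀ < ⋯ < j_r` of integers in `[0, m]` satisfies
`u ≤ j_u ≤ m - r + u`, so two such sequences differ by at most `m - r` in each entry and
their sums by at most `(r + 1)(m - r) = N - 1`. Hence for `1 ≤ z ≤ μ - 1` the exponent
`Nz + S' - S` lies strictly between `0` and `μN`, and no element of order at least `μN`
can be killed by it.
-/

lemma Fin.monotone_sub_val_of_strictMono {n : ℕ} {f : Fin (n + 1) → ℤ} (hf : StrictMono f) :
    Monotone fun i => f i - i :=
  Fin.monotone_iff_le_succ.2 fun i => by
    have := hf (Fin.castSucc_lt_succ (i := i))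
    simp only [Fin.val_castSucc, Fin.val_succ, Nat.cast_add, Nat.cast_one]
    omega

lemma Fin.sub_val_mem_Icc_of_strictMono {n : ℕ} {m : ℤ} {f : Fin (n + 1) → ℤ}
    (hf : StrictMono f) (hf0 : ∀ i, 0 ≤ f i) (hfm : ∀ i, f i ≤ m) (i : Fin (n + 1)) :
    f i - i ∈ Set.Icc 0 (m - n) := by
  have h0 := Fin.monotone_sub_val_of_strictMono hf (Fin.zero_le i)
  have hlast := Fin.monotone_sub_val_of_strictMono hf (Fin.le_last i)
  simp only [Fin.val_zero, Fin.val_last, Nat.cast_zero, sub_zero] at h0 hlast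
  exact ⟨(hf0 0).trans h0, hlast.trans (by linarith [hfm (Fin.last n)])⟩

lemma Fin.abs_sum_sub_sum_le_of_strictMono {n : ℕ} {m : ℤ} {f g : Fin (n + 1) → ℤ}
    (hf : StrictMono f) (hf0 : ∀ i, 0 ≤ f i) (hfm : ∀ i, f i ≤ m)
    (hg : StrictMono g) (hg0 : ∀ i, 0 ≤ g i) (hgm : ∀ i, g i ≤ m) :
    |∑ i, g i - ∑ i, f i| ≤ (n + 1) * (m - n) := by
  have hterm (i : Fin (n + 1)) : |g i - f i| ≤ m - n := by
    obtain ⟨hf₁, hf₂⟩ := Fin.sub_val_mem_Icc_of_strictMono hf hf0 hfm i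
    obtain ⟨hg₁, hg₂⟩ := Fin.sub_val_mem_Icc_of_strictMono hg hg0 hgm i
    simpa using abs_sub_le_of_nonneg_of_le hg₁ hg₂ hf₁ hf₂
  calc |∑ i, g i - ∑ i, f i| = |∑ i, (g i - f i)| := by rw [Finset.sum_sub_distrib]
    _ ≤ ∑ i, |g i - f i| := Finset.abs_sum_le_sum_abs _ _
    _ ≤ ∑ _i : Fin (n + 1), (m - n) := Finset.sum_le_sum fun i _ => hterm i
    _ = (n + 1) * (m - n) := by simp [mul_sub]

lemma one_le_mul_add_and_le_of_abs_le {N μ z D : ℤ} (hD : |D| ≤ N - 1) (hz1 : 1 ≤ z)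
    (hz2 : z ≤ μ - 1) : 1 ≤ N * z + D ∧ N * z + D ≤ N * μ - 1 := by
  obtain ⟨hD₁, hD₂⟩ := abs_le.1 hD
  have hN : 0 ≤ N - 1 := (abs_nonneg D).trans hD
  constructor <;> nlinarith

lemma zpow_ne_one_of_pos_of_lt_orderOf {G : Type*} [Group G] {x : G} {e : ℤ} (he : 0 < e)
    (hlt : e < orderOf x) : x ^ e ≠ 1 := by
  lift e to ℕ using he.le
  rw [zpow_natCast]
  exact pow_ne_one_of_lt_orderOf (by omega) (by exact_mod_cast hlt)

theorem statement6_general (r m μ : ℕ) (hrm : r ≤ m)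
    (N : ℕ) (hN : N = (r + 1) * (m - r) + 1)
    (z : ℕ) (hz1 : 1 ≤ z) (hz2 : z ≤ μ - 1)
    (j j' : Fin (r + 1) → ℤ)
    (hj : StrictMono j) (hj' : StrictMono j')
    (hjl : ∀ u, 0 ≤ j u) (hjh : ∀ u, j u ≤ (m : ℤ))
    (hj'l : ∀ u, 0 ≤ j' u) (hj'h : ∀ u, j' u ≤ (m : ℤ)) :
    (1 ≤ (N : ℤ) * z + (∑ u, j' u) - ∑ u, j u ∧
        (N : ℤ) * z + (∑ u, j' u) - ∑ u, j u ≤ (N : ℤ) * μ - 1) ∧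
      ∀ (K : Type) [Field K] [Fintype K] (β : Kˣ),
        μ * N ≤ orderOf β →
        β ^ ((N : ℤ) * z + (∑ u, j' u) - ∑ u, j u) ≠ 1 := by
  have hN' : (N : ℤ) - 1 = (r + 1) * ((m : ℤ) - r) := by
    subst hN; push_cast [Nat.cast_sub hrm]; ring
  have hD : |∑ u, j' u - ∑ u, j u| ≤ (N : ℤ) - 1 :=
    hN' ▸ Fin.abs_sum_sub_sum_le_of_strictMono hj hjl hjh hj' hj'l hj'h
  have hbounds := one_le_mul_add_and_le_of_abs_le (z := z) (μ := μ) hD (by exact_mod_cast hz1)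
    (by omega)
  rw [← add_sub_assoc] at hbounds
  refine ⟨hbounds, fun K _ _ β hβ => zpow_ne_one_of_pos_of_lt_orderOf hbounds.1 ?_⟩
  have : ((μ * N : ℕ) : ℤ) ≤ orderOf β := by exact_mod_cast hβ
  push_cast at this
  linarith [hbounds.2]

/-- Let `r, m, μ` be positive integers with `r ≤ m`, set
`N = (r+1)(m−r) + 1`, and let `1 ≤ z ≤ μ−1`.  Let `j₁ < … < j_{r+1}` and
`j'₁ < … < j'_{r+1}` be integers in `[0, m]`, with sums `S = Σ_u j_u` and
`S' = Σ_u j'_u`.  Then `1 ≤ Nz + S' − S ≤ Nμ − 1`.  Consequently, if `β` is an element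
of a finite field with multiplicative order at least `μN`, then `β^(Nz + S' − S) ≠ 1`. -/
theorem statement6 (r m μ : ℕ) (hr : 0 < r) (hm : 0 < m) (hμ : 0 < μ) (hrm : r ≤ m)
    (N : ℕ) (hN : N = (r + 1) * (m - r) + 1)
    (z : ℕ) (hz1 : 1 ≤ z) (hz2 : z ≤ μ - 1)
    (j j' : Fin (r + 1) → ℤ)
    (hj : StrictMono j) (hj' : StrictMono j')
    (hjl : ∀ u, 0 ≤ j u) (hjh : ∀ u, j u ≤ (m : ℤ))
    (hj'l : ∀ u, 0 ≤ j' u) (hj'h : ∀ u, j' u ≤ (m : ℤ)) :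
    (1 ≤ (N : ℤ) * z + (∑ u, j' u) - ∑ u, j u ∧
        (N : ℤ) * z + (∑ u, j' u) - ∑ u, j u ≤ (N : ℤ) * μ - 1) ∧
      ∀ (K : Type) [Field K] [Fintype K] (β : Kˣ),
        μ * N ≤ orderOf β →
        β ^ ((N : ℤ) * z + (∑ u, j' u) - ∑ u, j u) ≠ 1 :=
  statement6_general r m μ hrm N hN z hz1 hz2 j j' hj hj' hjl hjh hj'l hj'h
end
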